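/- In the game with rules a → ε, a^2 → ε, b → ε over {a,b}, with S(w) = (2k + 2α_1 + α_2) mod 4 as defined from the block decomposition w = a^{i_0} b ⋯ b a^{i_k} (α_r counting blocks with i_j ≡ r mod 3), every legal move strictly changes S(w) mod 4; i.e., if w → w' in one move then S(w') ≠ S(w). -/

import Mathlib

inductive AB | a | b
deriving DecidableEq

/-- One move of the game `{a → ε, a² → ε, b → ε}`. -/
def Step (w w' : List AB) : Prop :=
  ∃ x y : List AB, w' = x ++ y ∧
    (w = x ++ [AB.a] ++ y ∨ w = x ++ [AB.a, AB.a] ++ y ∨ w = x ++ [AB.b] ++ y)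

/-- The lengths `i_0, …, i_k` of the (possibly empty) maximal blocks of `a`'s in
the decomposition `w = a^{i_0} b a^{i_1} b ⋯ b a^{i_k}`. -/
def blocks (w : List AB) : List ℕ := (w.splitOn AB.b).map List.length

/-- `α_r`: the number of blocks of `a`'s whose length is `≡ r (mod 3)`. -/
def alpha (w : List AB) (r : ℕ) : ℕ := (blocks w).countP (fun i => i % 3 == r)

/-- `S(w) = (2k + 2α₁ + α₂) mod 4`, where `k = |w|_b`. -/
def S (w : List AB) : ℕ := (2 * w.count AB.b + 2 * alpha w 1 + alpha w 2) % 4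

/-! Modulo 4, `S w = 2k + Σ_j f(i_j)` with `f = 0, 2, 1` on the residues `0, 1, 2` mod 3.
Deleting a factor only affects the blocks of `a`'s touching it: deleting `a` or `aa` sends one
block `n ↦ n - 1` or `n ↦ n - 2`, which changes `f` because `f` is injective on residues, and
deleting `b` merges blocks `p, q` into `p + q` and lowers `k` by one, changing `S` by
`f(p + q) - f(p) - f(q) - 2`, which is nonzero mod 4 for all nine residue pairs. -/

open List

lemma blocks_append_cons_b (x y : List AB) : blocks (x ++ AB.b :: y) = blocks x ++ blocks y := by
  simp only [blocks, splitOn_append_cons_self, map_append]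

lemma blocks_of_b_not_mem {w : List AB} (h : AB.b ∉ w) : blocks w = [w.length] := by
  simp only [blocks, splitOn_eq_singleton h, map_cons, map_nil]

lemma exists_blocks_append_left (x : List AB) :
    ∃ L u, AB.b ∉ u ∧ ∀ z, blocks (x ++ z) = L ++ blocks (u ++ z) := by
  induction x using List.reverseRecOn with
  | nil => exact ⟨[], [], not_mem_nil, fun z => rfl⟩
  | append_singleton x c ih =>
    obtain ⟨L, u, hu, hx⟩ := ih
    cases c with
    | a => exact ⟨L, u ++ [AB.a], by simpa using hu, fun z => by simpa using hx (AB.a :: z)⟩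
    | b => exact ⟨blocks x, [], not_mem_nil, fun z => by simpa using blocks_append_cons_b x z⟩

lemma exists_blocks_append_right (y : List AB) :
    ∃ v M, AB.b ∉ v ∧ ∀ z, blocks (z ++ y) = blocks (z ++ v) ++ M := by
  induction y with
  | nil => exact ⟨[], [], not_mem_nil, fun z => by simp⟩
  | cons c y ih =>
    obtain ⟨v, M, hv, hy⟩ := ih
    cases c with
    | a => exact ⟨AB.a :: v, M, by simpa using hv, fun z => by simpa using hy (z ++ [AB.a])⟩
    | b => exact ⟨[], blocks y, not_mem_nil, fun z => by simpa using blocks_append_cons_b z y⟩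

def blockPotential (L : List ℕ) : ZMod 4 :=
  2 * L.countP (· % 3 == 1) + L.countP (· % 3 == 2)

lemma blockPotential_append (L M : List ℕ) :
    blockPotential (L ++ M) = blockPotential L + blockPotential M := by
  simp only [blockPotential, countP_append, Nat.cast_add]
  ring

lemma natCast_S (w : List AB) :
    (S w : ZMod 4) = 2 * w.count AB.b + blockPotential (blocks w) := by
  rw [S, ZMod.natCast_mod, blockPotential, alpha, alpha]
  push_cast
  ring

lemma exists_natCast_S_sub (x m y : List AB) : ∃ u v, AB.b ∉ u ∧ AB.b ∉ v ∧
    (S (x ++ m ++ y) : ZMod 4) - S (x ++ y) =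
      2 * m.count AB.b + blockPotential (blocks (u ++ m ++ v)) - blockPotential (blocks (u ++ v)) := by
  obtain ⟨L, u, hu, hx⟩ := exists_blocks_append_left x
  obtain ⟨v, M, hv, hy⟩ := exists_blocks_append_right y
  refine ⟨u, v, hu, hv, ?_⟩
  rw [natCast_S, natCast_S, append_assoc, hx, hx, ← append_assoc u, hy, hy]
  simp only [blockPotential_append, count_append, Nat.cast_add]
  ring

lemma blockPotential_singleton (n : ℕ) : blockPotential [n] = blockPotential [n % 3] := by
  simp [blockPotential]

lemma blockPotential_singleton_add_one (n : ℕ) : blockPotential [n + 1] ≠ blockPotential [n] := by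
  rw [blockPotential_singleton, blockPotential_singleton n, Nat.add_mod]
  have := Nat.mod_lt n three_pos
  generalize n % 3 = r at *
  interval_cases r <;> decide

lemma blockPotential_singleton_add_two (n : ℕ) : blockPotential [n + 2] ≠ blockPotential [n] := by
  rw [blockPotential_singleton, blockPotential_singleton n, Nat.add_mod]
  have := Nat.mod_lt n three_pos
  generalize n % 3 = r at *
  interval_cases r <;> decide

lemma blockPotential_pair (p q : ℕ) : 2 + blockPotential [p, q] ≠ blockPotential [p + q] := by
  rw [show [p, q] = [p] ++ [q] from rfl, blockPotential_append, blockPotential_singleton,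
    blockPotential_singleton q, blockPotential_singleton (p + q), Nat.add_mod]
  have := Nat.mod_lt p three_pos
  have := Nat.mod_lt q three_pos
  generalize p % 3 = r at *
  generalize q % 3 = s at *
  interval_cases r <;> interval_cases s <;> decide

theorem stmt11 : ∀ w w' : List AB, Step w w' → S w' ≠ S w := by
  rintro w w' ⟨x, y, rfl, hw⟩ hS
  have hsub : (S w : ZMod 4) - S (x ++ y) ≠ 0 := by
    rcases hw with rfl | rfl | rfl
    all_goals
      obtain ⟨u, v, hu, hv, hdiff⟩ := exists_natCast_S_sub x _ y
      rw [hdiff]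
    · rw [blocks_of_b_not_mem (by simp [hu, hv]), blocks_of_b_not_mem (by simp [hu, hv])]
      simpa [sub_eq_zero, add_assoc] using blockPotential_singleton_add_one (u.length + v.length)
    · rw [blocks_of_b_not_mem (by simp [hu, hv]), blocks_of_b_not_mem (by simp [hu, hv])]
      simpa [sub_eq_zero, add_assoc] using blockPotential_singleton_add_two (u.length + v.length)
    · rw [append_assoc, singleton_append, blocks_append_cons_b, blocks_of_b_not_mem hu,
        blocks_of_b_not_mem hv, blocks_of_b_not_mem (by simp [hu, hv])]
      simpa [sub_eq_zero] using blockPotential_pair u.length v.length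
  exact hsub (by rw [hS, sub_self])
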